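/- arXiv:2312.08326 — 2 statements merged into one kernel-verified Lean document; each statement's English description precedes it below -/
import Mathlib

section
/- Every map in pCh that has the right lifting property with respect to all maps of I also has the right lifting property with respect to all maps of J; that is, Inj(I) ⊆ Inj(J). -/
open CategoryTheory CategoryTheory.Limits
open scoped NNReal ENNReal

noncomputable section

abbrev PersMod : Type 1 := ℝ≥0 ⥤ ModuleCat.{0} ℚ

abbrev pCh : Type 1 := CochainComplex PersMod ℕ

namespace Pers

open Classical in
/-- The pointwise carrier of the interval persistence module `𝕀_{[s,t)}`. -/
def icar (s t : ℝ≥0∞) (u : ℝ≥0) : Submodule ℚ ℚ :=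
  if s ≤ (u : ℝ≥0∞) ∧ (u : ℝ≥0∞) < t then ⊤ else ⊥

lemma icar_le_of_le {s t : ℝ≥0∞} {u v : ℝ≥0} (huv : u ≤ v) (hv : (v : ℝ≥0∞) < t) :
    icar s t u ≤ icar s t v := by
  classical
  unfold icar
  by_cases h1 : s ≤ (u : ℝ≥0∞) ∧ (u : ℝ≥0∞) < t
  · rw [if_pos h1, if_pos ⟨h1.1.trans (ENNReal.coe_le_coe.mpr huv), hv⟩]
  · rw [if_neg h1]; exact bot_le

lemma icar_mono_birth {s s' : ℝ≥0∞} (h : s' ≤ s) (t : ℝ≥0∞) (u : ℝ≥0) :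
    icar s t u ≤ icar s' t u := by
  classical
  unfold icar
  by_cases h1 : s ≤ (u : ℝ≥0∞) ∧ (u : ℝ≥0∞) < t
  · rw [if_pos h1, if_pos ⟨h.trans h1.1, h1.2⟩]
  · rw [if_neg h1]; exact bot_le

/-- The interval persistence module `𝕀_{[s,t)}`. -/
def intervalMod (s t : ℝ≥0∞) : PersMod where
  obj u := ModuleCat.of ℚ (icar s t u)
  map {u v} huv :=
    if hv : (v : ℝ≥0∞) < t then
      ModuleCat.ofHom (Submodule.inclusion (icar_le_of_le (leOfHom huv) hv))
    else 0
  map_id u := by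
    try dsimp only
    by_cases hu : (u : ℝ≥0∞) < t
    · rw [dif_pos hu]
      ext x
      rfl
    · rw [dif_neg hu]
      have hbot : icar s t u = ⊥ := if_neg (fun h => hu h.2)
      haveI h1 : Subsingleton (icar s t u) := by rw [hbot]; infer_instance
      haveI : Subsingleton ↑(ModuleCat.of ℚ ↥(icar s t u)) := h1
      exact (ModuleCat.isZero_of_subsingleton _).eq_of_src _ _
  map_comp {u v w} huv hvw := by
    try dsimp only
    by_cases hw : (w : ℝ≥0∞) < t
    · have hv : (v : ℝ≥0∞) < t :=
        lt_of_le_of_lt (ENNReal.coe_le_coe.mpr (leOfHom hvw)) hw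
      rw [dif_pos hw, dif_pos hw, dif_pos hv]
      ext x
      rfl
    · rw [dif_neg hw, dif_neg hw, Limits.comp_zero]

end Pers

namespace Pers

/-- The inclusion `𝕀_{[a,t)} ⟶ 𝕀_{[b,t)}` of interval modules, for `b ≤ a`. -/
def intervalModIncl (t : ℝ≥0∞) {a b : ℝ≥0∞} (h : b ≤ a) :
    intervalMod a t ⟶ intervalMod b t where
  app u := ModuleCat.ofHom (Submodule.inclusion (icar_mono_birth h t u))
  naturality {u v} huv := by
    dsimp only [intervalMod]
    by_cases hv : (v : ℝ≥0∞) < t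
    · rw [dif_pos hv, dif_pos hv]
      ext x
      rfl
    · rw [dif_neg hv, dif_neg hv, Limits.zero_comp, Limits.comp_zero]

open Classical in
/-- A totalized version of the inclusion of interval modules:
the inclusion when `b ≤ a`, and `0` otherwise. -/
def intervalModHom (t : ℝ≥0∞) (a b : ℝ≥0∞) : intervalMod a t ⟶ intervalMod b t :=
  if h : b ≤ a then intervalModIncl t h else 0

/-- Degree profile of a complex concentrated in degrees `m` (value `c`) and
`m+1` (value `d`); value `⊤` encodes the zero module. -/
def phi (m : ℕ) (c d : ℝ≥0∞) : ℕ → ℝ≥0∞ :=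
  fun n => if n = m then c else if n = m + 1 then d else ⊤

lemma phi_mono {m : ℕ} {c d c' d' : ℝ≥0∞} (hc : c' ≤ c) (hd : d' ≤ d) (n : ℕ) :
    phi m c' d' n ≤ phi m c d n := by
  unfold phi
  split_ifs <;> first | exact hc | exact hd | exact le_rfl

open Classical in
/-- The persistent cochain complex concentrated in degrees `m` and `m + 1`,
with values the 'step' interval modules `𝕀_{[c,∞)}` and `𝕀_{[d,∞)}`, and with
differential the natural inclusion (when `d ≤ c`). -/
def twoStep (m : ℕ) (c d : ℝ≥0∞) : pCh where
  X n := intervalMod (phi m c d n) ⊤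
  d i j :=
    if i = m ∧ j = m + 1 then intervalModHom ⊤ (phi m c d i) (phi m c d j) else 0
  shape i j hij := by
    try dsimp only
    rw [if_neg]
    rintro ⟨rfl, rfl⟩
    exact hij rfl
  d_comp_d' i j k hij hjk := by
    try dsimp only
    by_cases hi : i = m ∧ j = m + 1
    · rw [if_neg (by omega : ¬(j = m ∧ k = m + 1))]
      exact Limits.comp_zero
    · rw [if_neg hi]
      exact Limits.zero_comp

/-- The morphism of two-step complexes induced by inclusions. -/
def twoStepHom (m : ℕ) {c d c' d' : ℝ≥0∞} (hdc : d ≤ c) (hdc' : d' ≤ c')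
    (hc : c' ≤ c) (hd : d' ≤ d) : twoStep m c d ⟶ twoStep m c' d' where
  f n := intervalModIncl ⊤ (phi_mono hc hd n)
  comm' i j hij := by
    dsimp only [twoStep]
    by_cases hi : i = m ∧ j = m + 1
    · rw [if_pos hi, if_pos hi]
      obtain ⟨rfl, rfl⟩ := hi
      have h1 : phi i c d (i + 1) ≤ phi i c d i := by
        simp [phi, Nat.succ_ne_self]
        exact hdc
      have h1' : phi i c' d' (i + 1) ≤ phi i c' d' i := by
        simp [phi, Nat.succ_ne_self]
        exact hdc'
      rw [intervalModHom, dif_pos h1', intervalModHom, dif_pos h1]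
      ext u x
      rfl
    · rw [if_neg hi, if_neg hi, Limits.zero_comp, Limits.comp_zero]

end Pers

namespace Pers

open ZeroObject

/-- The interval sphere `𝕊^k_{[s,t)}` (with `t = ⊤` allowed). -/
def sphere (k : ℕ) (s : ℝ≥0) (t : ℝ≥0∞) : pCh :=
  match k with
  | 0 => (HomologicalComplex.single PersMod (ComplexShape.up ℕ) 0).obj
      (intervalMod (s : ℝ≥0∞) t)
  | m + 1 => twoStep m t (s : ℝ≥0∞)

/-- The persistent disk `𝔻^k_s` (with the convention `𝔻^0_s = 0`). -/
def disk (k : ℕ) (s : ℝ≥0) : pCh :=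
  match k with
  | 0 => 0
  | m + 1 => twoStep m (s : ℝ≥0∞) (s : ℝ≥0∞)

/-- The canonical inclusion `𝕊^k_{[s,t)} ⟶ 𝔻^k_s`. -/
def sphereToDisk (k : ℕ) (s : ℝ≥0) (t : ℝ≥0∞) (h : (s : ℝ≥0∞) ≤ t) :
    sphere k s t ⟶ disk k s :=
  match k with
  | 0 => 0
  | m + 1 => twoStepHom m h le_rfl h le_rfl

/-- The canonical inclusion `𝔻^k_t ⟶ 𝔻^k_s` for `s ≤ t`. -/
def diskToDisk (k : ℕ) (s t : ℝ≥0) (h : s ≤ t) : disk k t ⟶ disk k s :=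
  match k with
  | 0 => 0
  | m + 1 => twoStepHom m le_rfl le_rfl (ENNReal.coe_le_coe.mpr h) (ENNReal.coe_le_coe.mpr h)

/-- The set `I₀` of generating maps `𝕊^k_{[s,t)} ⟶ 𝔻^k_s`, `0 ≤ s < t < ∞`. -/
inductive I0mem : ∀ ⦃A B : pCh⦄, (A ⟶ B) → Prop
  | mk (k : ℕ) (s t : ℝ≥0) (h : s < t) :
      I0mem (sphereToDisk k s (t : ℝ≥0∞) (ENNReal.coe_le_coe.mpr h.le))

/-- The set `I∞` of generating maps `𝕊^k_{[s,∞)} ⟶ 𝔻^k_s`. -/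
inductive IinfMem : ∀ ⦃A B : pCh⦄, (A ⟶ B) → Prop
  | mk (k : ℕ) (s : ℝ≥0) : IinfMem (sphereToDisk k s ⊤ le_top)

/-- The set `I = I₀ ∪ I∞`. -/
def Imem : MorphismProperty pCh := fun _ _ f => I0mem f ∨ IinfMem f

/-- The set `J₀` of maps `𝔻^k_t ⟶ 𝔻^k_s`, `0 ≤ s < t < ∞`. -/
inductive J0mem : ∀ ⦃A B : pCh⦄, (A ⟶ B) → Prop
  | mk (k : ℕ) (s t : ℝ≥0) (h : s < t) : J0mem (diskToDisk k s t h.le)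

/-- The set `J∞` of maps `0 ⟶ 𝔻^k_s`. -/
inductive JinfMem : ∀ ⦃A B : pCh⦄, (A ⟶ B) → Prop
  | mk (k : ℕ) (s : ℝ≥0) : JinfMem (0 : (0 : pCh) ⟶ disk k s)

/-- The set `J = J₀ ∪ J∞`. -/
def Jmem : MorphismProperty pCh := fun _ _ f => J0mem f ∨ JinfMem f

/-- `Inj S`: the class of morphisms with the right lifting property with respect
to every morphism in `S`. -/
def Inj (S : MorphismProperty pCh) : MorphismProperty pCh :=
  fun _ _ f => ∀ ⦃A B : pCh⦄ (i : A ⟶ B), S i → HasLiftingProperty i f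

/-- `Cof S`: the class of morphisms with the left lifting property with respect
to every morphism in `Inj S`. -/
def Cof (S : MorphismProperty pCh) : MorphismProperty pCh :=
  fun _ _ i => ∀ ⦃X Y : pCh⦄ (f : X ⟶ Y), Inj S f → HasLiftingProperty i f

/-- Evaluation of a persistent cochain complex at a time `u`. -/
def evalAt (u : ℝ≥0) : pCh ⥤ CochainComplex (ModuleCat.{0} ℚ) ℕ :=
  ((evaluation ℝ≥0 (ModuleCat.{0} ℚ)).obj u).mapHomologicalComplex (ComplexShape.up ℕ)

/-- The class `W` of pointwise quasi-isomorphisms. -/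
def Wclass : MorphismProperty pCh :=
  fun _ _ f => ∀ u : ℝ≥0, QuasiIso ((evalAt u).map f)

end Pers

namespace Pers

/-- An object of a functor category indexed by `[0,∞)` is tame if there is a finite
set of reals such that structure maps not crossing any of them are isomorphisms. -/
def TameFunctor {C : Type*} [Category C] (F : ℝ≥0 ⥤ C) : Prop :=
  ∃ T : Finset ℝ≥0, ∀ (s u : ℝ≥0) (h : s ≤ u),
    (∀ r ∈ T, ¬(s < r ∧ r ≤ u)) → IsIso (F.map (homOfLE h))

/-- Tameness for a persistent cochain complex: all structure maps away from a finite
set of critical values are isomorphisms (in every degree). -/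
def TamePCh (X : pCh) : Prop :=
  ∃ T : Finset ℝ≥0, ∀ (s u : ℝ≥0) (h : s ≤ u),
    (∀ r ∈ T, ¬(s < r ∧ r ≤ u)) → ∀ k : ℕ, IsIso ((X.X k).map (homOfLE h))

/-- An object `X` of a category is compact if `Hom(X, -)` preserves filtered colimits. -/
def IsCompactObject {C : Type*} [Category C] (X : C) : Prop :=
  ∀ (J : Type) (_ : SmallCategory J) (_ : IsFiltered J),
    Nonempty (PreservesColimitsOfShape J (coyoneda.obj (Opposite.op X)))

/-- A persistence module is locally compact if every point lies in a compact subfunctor. -/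
def LocallyCompactMod (V : PersMod) : Prop :=
  ∀ (r : ℝ≥0) (v : V.obj r), ∃ (U : PersMod) (ι : U ⟶ V),
    Mono ι ∧ IsCompactObject U ∧ v ∈ Set.range (ι.app r)

/-- A persistent cochain complex is locally compact if every element lies in a compact
subobject. -/
def LocallyCompactPCh (X : pCh) : Prop :=
  ∀ (k : ℕ) (r : ℝ≥0) (x : (X.X k).obj r), ∃ (W : pCh) (ι : W ⟶ X),
    Mono ι ∧ IsCompactObject W ∧ x ∈ Set.range ((ι.f k).app r)

/-- A morphism is a retract of another morphism (in the arrow category). -/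
def IsRetractOfArrow {C : Type*} [Category C] {X Y X' Y' : C}
    (f : X ⟶ Y) (g : X' ⟶ Y') : Prop :=
  ∃ (i : Arrow.mk f ⟶ Arrow.mk g) (r : Arrow.mk g ⟶ Arrow.mk f), i ≫ r = 𝟙 (Arrow.mk f)

/-- The axioms of a model structure on `pCh`, given by classes of weak equivalences,
fibrations and cofibrations. -/
structure IsModelStructure (Weq Fib Cofib : MorphismProperty pCh) : Prop where
  /-- two-out-of-three: compositions -/
  weq_comp : ∀ {X Y Z : pCh} (f : X ⟶ Y) (g : Y ⟶ Z), Weq f → Weq g → Weq (f ≫ g)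
  /-- two-out-of-three: right cancellation -/
  weq_of_comp_left : ∀ {X Y Z : pCh} (f : X ⟶ Y) (g : Y ⟶ Z), Weq f → Weq (f ≫ g) → Weq g
  /-- two-out-of-three: left cancellation -/
  weq_of_comp_right : ∀ {X Y Z : pCh} (f : X ⟶ Y) (g : Y ⟶ Z), Weq g → Weq (f ≫ g) → Weq f
  /-- the classes are closed under retracts -/
  weq_retract : ∀ {X Y X' Y' : pCh} (f : X ⟶ Y) (g : X' ⟶ Y'),
    IsRetractOfArrow f g → Weq g → Weq f
  fib_retract : ∀ {X Y X' Y' : pCh} (f : X ⟶ Y) (g : X' ⟶ Y'),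
    IsRetractOfArrow f g → Fib g → Fib f
  cof_retract : ∀ {X Y X' Y' : pCh} (f : X ⟶ Y) (g : X' ⟶ Y'),
    IsRetractOfArrow f g → Cofib g → Cofib f
  /-- lifting of trivial cofibrations against fibrations -/
  lift_triv_cof : ∀ {A B X Y : pCh} (i : A ⟶ B) (p : X ⟶ Y),
    Cofib i → Weq i → Fib p → HasLiftingProperty i p
  /-- lifting of cofibrations against trivial fibrations -/
  lift_triv_fib : ∀ {A B X Y : pCh} (i : A ⟶ B) (p : X ⟶ Y),
    Cofib i → Fib p → Weq p → HasLiftingProperty i p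
  /-- factorization as a trivial cofibration followed by a fibration -/
  fact₁ : ∀ {X Y : pCh} (f : X ⟶ Y), ∃ (Z : pCh) (i : X ⟶ Z) (p : Z ⟶ Y),
    Cofib i ∧ Weq i ∧ Fib p ∧ i ≫ p = f
  /-- factorization as a cofibration followed by a trivial fibration -/
  fact₂ : ∀ {X Y : pCh} (f : X ⟶ Y), ∃ (Z : pCh) (i : X ⟶ Z) (p : Z ⟶ Y),
    Cofib i ∧ Fib p ∧ Weq p ∧ i ≫ p = f

end Pers

namespace Pers

/-- A morphism is a pushout of a coproduct of morphisms in `S`. -/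
def IsPushoutOfCoproductsOf (S : MorphismProperty pCh) : MorphismProperty pCh :=
  fun A B g => ∃ (Γ : Type) (Xs Ys : Γ → pCh) (ι : ∀ γ, Xs γ ⟶ Ys γ),
    (∀ γ, S (ι γ)) ∧ ∃ (a : (∐ Xs) ⟶ A) (b : (∐ Ys) ⟶ B),
      IsPushout (Limits.Sigma.map fun γ => ι γ) a b g

/-- The inclusion functor of the initial segment `Set.Iio b` of a preorder. -/
def iioFunctor {β : Type} [Preorder β] (b : β) : Set.Iio b ⥤ β :=
  Monotone.functor (f := (Subtype.val : Set.Iio b → β)) (fun _ _ h => h)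

/-- The cocone over the restriction of `F` to `Set.Iio b` with apex `F.obj b`. -/
def iioCocone {β : Type} [Preorder β] (F : β ⥤ pCh) (b : β) :
    Cocone (iioFunctor b ⋙ F) where
  pt := F.obj b
  ι :=
    { app := fun x => F.map (homOfLE x.2.le)
      naturality := by
        intro x y g
        dsimp [iioFunctor, Monotone.functor]
        rw [Category.comp_id, ← F.map_comp]
        exact congrArg F.map (Subsingleton.elim _ _) }

/-- A witness that `f : X ⟶ Y` is a transfinite composition of morphisms in `S`:
a well-ordered continuous chain starting at `X`, with colimit `Y`, all whose
successor maps lie in `S`. -/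
structure TransfiniteCompositionWitness (S : MorphismProperty pCh)
    {X Y : pCh} (f : X ⟶ Y) where
  /-- the (well-ordered) indexing type -/
  β : Type
  [lo : LinearOrder β]
  [bot : OrderBot β]
  [succ : SuccOrder β]
  [wf : WellFoundedLT β]
  /-- the chain -/
  F : β ⥤ pCh
  /-- the chain starts at `X` -/
  iso : F.obj ⊥ ≅ X
  /-- the maps to the colimit `Y` -/
  incl : F ⟶ (Functor.const β).obj Y
  /-- `Y` is the colimit of the chain -/
  isColimit : IsColimit (Cocone.mk Y incl)
  /-- each successor map belongs to `S` -/
  succ_mem : ∀ b : β, ¬ IsMax b → S (F.map (homOfLE (Order.le_succ b)))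
  /-- the chain is continuous at every limit element -/
  limit_continuous : ∀ b : β, Order.IsSuccLimit b →
    Nonempty (IsColimit (iioCocone F b))
  /-- the composite of the whole chain is `f` -/
  fac : iso.inv ≫ incl.app ⊥ = f

/-- `f` is a transfinite composition of morphisms in `S`. -/
def IsTransfiniteCompositionOf (S : MorphismProperty pCh) {X Y : pCh}
    (f : X ⟶ Y) : Prop :=
  Nonempty (TransfiniteCompositionWitness S f)

open ZeroObject in
/-- An `I`-cell complex: an object `X` such that `0 ⟶ X` is a transfinite composition
of pushouts of coproducts of maps in `I`. -/
def IsICellComplex (X : pCh) : Prop :=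
  IsTransfiniteCompositionOf (IsPushoutOfCoproductsOf Imem) (0 : (0 : pCh) ⟶ X)

end Pers

/-- The category of copersistent simplicial sets. -/
abbrev CoPersSSet : Type 1 := ℝ≥0ᵒᵖ ⥤ SSet.{0}

namespace Pers

/-- Tameness for a copersistent simplicial set. -/
def TameCo (F : CoPersSSet) : Prop :=
  ∃ T : Finset ℝ≥0, ∀ (s u : ℝ≥0) (h : s ≤ u),
    (∀ r ∈ T, ¬(s < r ∧ r ≤ u)) → IsIso (F.map (homOfLE h).op)

/-- A simplex of a simplicial set is degenerate if it is in the image of a simplex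
of strictly smaller dimension. -/
def IsDegenerate (K : SSet) {n : ℕ}
    (x : K.obj (Opposite.op (SimplexCategory.mk n))) : Prop :=
  ∃ (m : ℕ) (_ : m < n) (g : SimplexCategory.mk n ⟶ SimplexCategory.mk m)
    (y : K.obj (Opposite.op (SimplexCategory.mk m))), K.map g.op y = x

/-- A simplicial set is finite if it has finitely many nondegenerate simplices. -/
def FiniteSSet (K : SSet) : Prop :=
  Finite (Σ n : ℕ, {x : K.obj (Opposite.op (SimplexCategory.mk n)) // ¬ IsDegenerate K x})

end Pers

/-!
For `s < t ≤ ∞`, the map `𝔻^k_t ⟶ 𝔻^k_s` factors as `𝔻^k_t ⟶ 𝕊^k_{[s,t)} ⟶ 𝔻^k_s`; for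
`t = ∞` the source `𝔻^k_∞` is zero, so this also covers `0 ⟶ 𝔻^k_s`. The second factor lies in
`I`. The first one is a pushout of `𝕊^{k+1}_{[s,t)} ⟶ 𝔻^{k+1}_s ∈ I`: in each degree the square
has either both horizontal or both vertical maps invertible. Since the left lifting property
against a fixed map is stable under pushout and composition, every map of `J` lifts against
every map of `Inj(I)`.
-/

namespace HomologicalComplex

variable {C ι : Type*} [Category C] [HasZeroMorphisms C] {c : ComplexShape ι}
  {K L M N : HomologicalComplex C c} {f : K ⟶ L} {g : K ⟶ M} {inl : L ⟶ N} {inr : M ⟶ N}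

lemma isPushout_of_isPushout_f (w : f ≫ inl = g ≫ inr)
    (h : ∀ n, IsPushout (f.f n) (g.f n) (inl.f n) (inr.f n)) : IsPushout f g inl inr :=
  IsPushout.of_isColimit' ⟨w⟩ <| isColimitOfEval _ _ fun n =>
    (isColimitMapCoconePushoutCoconeEquiv (eval C c n) _).symm (h n).isColimit

end HomologicalComplex

lemma CategoryTheory.Limits.IsZero.hasLiftingProperty {C : Type*} [Category C] {A B X Y : C}
    (hA : IsZero A) (hB : IsZero B) (i : A ⟶ B) (p : X ⟶ Y) : HasLiftingProperty i p :=
  have := hA.isIso hB i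
  inferInstance

namespace Pers

lemma isZero_intervalMod_top (t : ℝ≥0∞) : IsZero (intervalMod ⊤ t) := by
  refine Functor.isZero _ fun u => ?_
  have hbot : icar ⊤ t u = ⊥ := if_neg fun h => ENNReal.coe_ne_top (top_le_iff.mp h.1)
  have : Subsingleton (icar ⊤ t u) := by rw [hbot]; infer_instance
  exact ModuleCat.isZero_of_subsingleton (ModuleCat.of ℚ (icar ⊤ t u))

lemma intervalModHom_of_le (t : ℝ≥0∞) {a b : ℝ≥0∞} (h : b ≤ a) :
    intervalModHom t a b = intervalModIncl t h :=
  dif_pos h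

lemma intervalModIncl_refl (t a : ℝ≥0∞) : intervalModIncl t (le_refl a) = 𝟙 (intervalMod a t) :=
  rfl

lemma intervalModHom_comp (t : ℝ≥0∞) {a b c : ℝ≥0∞} (h₁ : b ≤ a) (h₂ : c ≤ b) :
    intervalModHom t a b ≫ intervalModHom t b c = intervalModHom t a c := by
  rw [intervalModHom_of_le t h₁, intervalModHom_of_le t h₂, intervalModHom_of_le t (h₂.trans h₁)]
  rfl

lemma isIso_intervalModIncl (t : ℝ≥0∞) {a b : ℝ≥0∞} (h : b ≤ a) (hab : a = b) :
    IsIso (intervalModIncl t h) := by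
  subst hab
  rw [intervalModIncl_refl]
  infer_instance

lemma isIso_intervalModHom (t : ℝ≥0∞) {a b : ℝ≥0∞} (hab : a = b) :
    IsIso (intervalModHom t a b) := by
  rw [intervalModHom_of_le t hab.ge]
  exact isIso_intervalModIncl t _ hab

lemma phi_self (m : ℕ) (c d : ℝ≥0∞) : phi m c d m = c := if_pos rfl

lemma phi_succ (m : ℕ) (c d : ℝ≥0∞) : phi m c d (m + 1) = d := by
  simp [phi]

lemma phi_of_ne {m n : ℕ} (c d : ℝ≥0∞) (h₁ : n ≠ m) (h₂ : n ≠ m + 1) : phi m c d n = ⊤ := by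
  simp [phi, h₁, h₂]

lemma phi_congr_left {m n : ℕ} (c c' d : ℝ≥0∞) (h : n ≠ m) : phi m c d n = phi m c' d n := by
  simp [phi, h]

lemma phi_congr_right {m n : ℕ} (c d d' : ℝ≥0∞) (h : n ≠ m + 1) : phi m c d n = phi m c d' n := by
  simp [phi, h]

lemma isZero_twoStep_X {m n : ℕ} (c d : ℝ≥0∞) (h₁ : n ≠ m) (h₂ : n ≠ m + 1) :
    IsZero ((twoStep m c d).X n) := by
  change IsZero (intervalMod (phi m c d n) ⊤)
  rw [phi_of_ne c d h₁ h₂]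
  exact isZero_intervalMod_top ⊤

lemma isZero_twoStep_top (m : ℕ) : IsZero (twoStep m ⊤ ⊤) := by
  rw [IsZero.iff_id_eq_zero]
  refine HomologicalComplex.hom_ext _ _ fun n => ?_
  have hX : IsZero (intervalMod (phi m ⊤ ⊤ n) ⊤) := by
    rw [show phi m ⊤ ⊤ n = ⊤ by unfold phi; split_ifs <;> rfl]
    exact isZero_intervalMod_top ⊤
  exact hX.eq_of_src _ _

lemma twoStepHom_f (m : ℕ) {c d c' d' : ℝ≥0∞} (hdc : d ≤ c) (hdc' : d' ≤ c')
    (hc : c' ≤ c) (hd : d' ≤ d) (n : ℕ) :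
    (twoStepHom m hdc hdc' hc hd).f n = intervalModHom ⊤ (phi m c d n) (phi m c' d' n) :=
  (intervalModHom_of_le ⊤ (phi_mono hc hd n)).symm

lemma twoStepHom_comp (m : ℕ) {c d c' d' c'' d'' : ℝ≥0∞} (hdc : d ≤ c) (hdc' : d' ≤ c')
    (hdc'' : d'' ≤ c'') (hc : c' ≤ c) (hd : d' ≤ d) (hc' : c'' ≤ c') (hd' : d'' ≤ d') :
    twoStepHom m hdc hdc' hc hd ≫ twoStepHom m hdc' hdc'' hc' hd' =
      twoStepHom m hdc hdc'' (hc'.trans hc) (hd'.trans hd) :=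
  rfl

/-- Concentrated in degree `m + 1`, where it is the identity of `𝕀_{[a,∞)}`. -/
def twoStepShift (m : ℕ) (a b c : ℝ≥0∞) : twoStep (m + 1) a b ⟶ twoStep m c a where
  f n := intervalModHom ⊤ (phi (m + 1) a b n) (phi m c a n)
  comm' i j hij := by
    obtain rfl : j = i + 1 := hij.symm
    by_cases hi : i = m + 1 ∨ i = m + 2
    · exact (isZero_twoStep_X (m := m) (n := i + 1) c a (by omega) (by omega)).eq_of_tgt _ _
    · exact (isZero_twoStep_X (m := m + 1) (n := i) a b (by omega) (by omega)).eq_of_src _ _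

lemma twoStepShift_f (m : ℕ) (a b c : ℝ≥0∞) (n : ℕ) :
    (twoStepShift m a b c).f n = intervalModHom ⊤ (phi (m + 1) a b n) (phi m c a n) :=
  rfl

/-- In the paper's notation, `𝔻^{m+1}_c ⟶ 𝕊^{m+1}_{[d,c)}` is a pushout of
`𝕊^{m+2}_{[d,c)} ⟶ 𝔻^{m+2}_d`. -/
lemma isPushout_twoStepHom (m : ℕ) {c d : ℝ≥0∞} (h : d ≤ c) :
    IsPushout (twoStepShift m c d c) (twoStepHom (m + 1) h le_rfl h le_rfl)
      (twoStepHom m le_rfl h le_rfl h) (twoStepShift m d d c) := by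
  have w : ∀ n, (twoStepShift m c d c).f n ≫ (twoStepHom m le_rfl h le_rfl h).f n =
      (twoStepHom (m + 1) h le_rfl h le_rfl).f n ≫ (twoStepShift m d d c).f n := by
    intro n
    by_cases hn : n = m + 1
    · subst hn
      have h₁ : phi m c c (m + 1) ≤ phi (m + 1) c d (m + 1) := by rw [phi_self, phi_succ]
      have h₂ : phi m c d (m + 1) ≤ phi m c c (m + 1) := by rw [phi_succ, phi_succ]; exact h
      have h₃ : phi (m + 1) d d (m + 1) ≤ phi (m + 1) c d (m + 1) := by
        rw [phi_self, phi_self]; exact h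
      have h₄ : phi m c d (m + 1) ≤ phi (m + 1) d d (m + 1) := by rw [phi_self, phi_succ]
      rw [twoStepShift_f, twoStepShift_f, twoStepHom_f, twoStepHom_f]
      exact (intervalModHom_comp ⊤ h₁ h₂).trans (intervalModHom_comp ⊤ h₃ h₄).symm
    by_cases hn' : n = m
    · subst hn'
      exact (isZero_twoStep_X c d (by omega) (by omega)).eq_of_src _ _
    · exact (isZero_twoStep_X c d hn' hn).eq_of_tgt _ _
  refine HomologicalComplex.isPushout_of_isPushout_f
    (HomologicalComplex.hom_ext _ _ fun n => by simpa using w n) fun n => ?_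
  by_cases hn : n = m + 1
  · subst hn
    have : IsIso ((twoStepShift m c d c).f (m + 1)) :=
      isIso_intervalModHom ⊤ (by rw [phi_self, phi_succ])
    have : IsIso ((twoStepShift m d d c).f (m + 1)) :=
      isIso_intervalModHom ⊤ (by rw [phi_self, phi_succ])
    exact IsPushout.of_horiz_isIso ⟨w _⟩
  · have : IsIso ((twoStepHom (m + 1) h le_rfl h le_rfl).f n) :=
      isIso_intervalModIncl ⊤ (phi_mono h le_rfl n) (phi_congr_left c d d hn)
    have : IsIso ((twoStepHom m le_rfl h le_rfl h).f n) :=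
      isIso_intervalModIncl ⊤ (phi_mono le_rfl h n) (phi_congr_right c c d hn)
    exact IsPushout.of_vert_isIso ⟨w _⟩

lemma imem_sphereToDisk (k : ℕ) (s : ℝ≥0) {c : ℝ≥0∞} (h : (s : ℝ≥0∞) < c) :
    Imem (sphereToDisk k s c h.le) := by
  induction c using ENNReal.recTopCoe with
  | top => exact Or.inr (IinfMem.mk k s)
  | coe t => exact Or.inl (I0mem.mk k s t (ENNReal.coe_lt_coe.mp h))

lemma hasLiftingProperty_twoStepHom_of_inj {X Y : pCh} {f : X ⟶ Y} (hf : Inj Imem f) (m : ℕ)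
    (s : ℝ≥0) {c : ℝ≥0∞} (h : (s : ℝ≥0∞) < c) :
    HasLiftingProperty
      (twoStepHom m le_rfl le_rfl h.le h.le : twoStep m c c ⟶ twoStep m s s) f := by
  have : HasLiftingProperty (twoStepHom m h.le le_rfl h.le le_rfl) f :=
    hf _ (imem_sphereToDisk (m + 1) s h)
  have : HasLiftingProperty (twoStepHom m le_rfl h.le le_rfl h.le) f :=
    have : HasLiftingProperty (twoStepHom (m + 1) h.le le_rfl h.le le_rfl) f :=
      hf _ (imem_sphereToDisk (m + 2) s h)
    (isPushout_twoStepHom m h.le).hasLiftingProperty f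
  rw [← twoStepHom_comp m le_rfl h.le le_rfl le_rfl h.le h.le le_rfl]
  infer_instance

/-- Every map with the right lifting property with respect to all
maps of `I` also has the right lifting property with respect to all maps of `J`;
that is, `Inj(I) ⊆ Inj(J)`. -/
theorem inj_I_subset_inj_J {X Y : pCh} (f : X ⟶ Y) (hf : Inj Imem f) :
    Inj Jmem f := by
  rintro A B i (⟨k, s, t, hst⟩ | ⟨k, s⟩)
  · cases k with
    | zero => exact (isZero_zero pCh).hasLiftingProperty (isZero_zero pCh) _ f
    | succ m => exact hasLiftingProperty_twoStepHom_of_inj hf m s (ENNReal.coe_lt_coe.mpr hst)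
  · cases k with
    | zero => exact (isZero_zero pCh).hasLiftingProperty (isZero_zero pCh) _ f
    | succ m =>
      have hs : (s : ℝ≥0∞) < ⊤ := ENNReal.coe_lt_top
      have := hasLiftingProperty_twoStepHom_of_inj hf m s hs
      exact HasLiftingProperty.of_arrow_iso_left (Arrow.isoMk
        (f := Arrow.mk (twoStepHom m le_rfl le_rfl hs.le hs.le))
        ((isZero_twoStep_top m).iso (isZero_zero pCh)) (Iso.refl _)
        ((isZero_twoStep_top m).eq_of_src _ _)) f

end Pers
end
end

section
/- A persistence module V (an object of pVec) is a compact object of pVec if and only if V is tame and of finite type, i.e. V(u) is a finite-dimensional ℚ-vector space for every u ≥ 0. -/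
open CategoryTheory CategoryTheory.Limits
open scoped NNReal ENNReal

noncomputable section

/-!
Every `V` is a filtered colimit in two ways: of its tame approximations `u ↦ V (crit T u)` over
finite sets `T`, and of its finitely generated subfunctors. If `V` is compact, its identity
factors through a stage of each, which makes `V` a retract of a tame functor and each `V u`
finitely generated.

Conversely, if `V` is tame with critical values `T`, a natural transformation out of `V` is the
same as a compatible family of maps `V t ⟶ W t` at the finitely many `t ∈ insert 0 T`. Hence
`Hom(V, -)` is a finite limit of the functors `W ↦ Hom(V t, W t')`, which preserve filtered
colimits because each `V t` is finite-dimensional; and finite limits of such functors again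
preserve filtered colimits.
-/

universe u v

open Opposite

attribute [local instance] Cardinal.fact_isRegular_aleph0

lemma ModuleCat.isFinitelyPresentable_of_free_of_finite {R : Type u} [Ring R]
    (M : ModuleCat.{u} R) [Module.Free R M] [Module.Finite R M] : IsFinitelyPresentable.{u} M := by
  have : IsFinitelyPresentable.{u} (Module.Free.ChooseBasisIndex R M) :=
    HasCardinalLT.isCardinalPresentable ((hasCardinalLT_aleph0_iff _).2 inferInstance)
  have : (forget (ModuleCat.{u} R)).IsCardinalAccessible Cardinal.aleph0.{u} :=
    Functor.IsFinitelyAccessible_iff_preservesFilteredColimitsOfSize.2 inferInstance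
  have : IsFinitelyPresentable.{u} (ModuleCat.of R (Module.Free.ChooseBasisIndex R M →₀ R)) :=
    (ModuleCat.adj R).isCardinalPresentable_leftAdjoint_obj _ (Module.Free.ChooseBasisIndex R M)
  exact isCardinalPresentable_of_iso
    (LinearEquiv.toModuleIso (Module.Free.chooseBasis R M).repr).symm _

namespace Pers

lemma isCompactObject_iff_isFinitelyPresentable {C : Type*} [Category.{0} C] (X : C) :
    IsCompactObject X ↔ IsFinitelyPresentable.{0} X := by
  rw [isFinitelyPresentable_iff_preservesFilteredColimitsOfSize]
  exact ⟨fun h => ⟨fun J _ hJ => (h J _ hJ).some⟩, fun _ _ _ _ => ⟨inferInstance⟩⟩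

section Thin

variable {P : Type*} [Preorder P] {C : Type*} [Category C] (V : P ⥤ C)

lemma map_comp_map_eq {a b b' c : P} (f : a ⟶ b) (g : b ⟶ c) (f' : a ⟶ b') (g' : b' ⟶ c) :
    V.map f ≫ V.map g = V.map f' ≫ V.map g' := by
  rw [← V.map_comp, ← V.map_comp]
  rfl

lemma map_comp_map_eq_id {a b : P} (f : a ⟶ b) (g : b ⟶ a) : V.map f ≫ V.map g = 𝟙 _ := by
  rw [← V.map_comp, Subsingleton.elim (f ≫ g) (𝟙 a), V.map_id]

end Thin

section Crit

def crit (T : Finset ℝ≥0) (u : ℝ≥0) : ℝ≥0 :=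
  ((insert 0 T).filter (· ≤ u)).max' ⟨0, Finset.mem_filter.2 ⟨Finset.mem_insert_self _ _, by simp⟩⟩

variable {T : Finset ℝ≥0}

lemma crit_mem_filter (T : Finset ℝ≥0) (u : ℝ≥0) : crit T u ∈ (insert 0 T).filter (· ≤ u) :=
  Finset.max'_mem _ _

lemma crit_le (T : Finset ℝ≥0) (u : ℝ≥0) : crit T u ≤ u :=
  (Finset.mem_filter.1 (crit_mem_filter T u)).2

lemma crit_mem (T : Finset ℝ≥0) (u : ℝ≥0) : crit T u ∈ insert 0 T :=
  (Finset.mem_filter.1 (crit_mem_filter T u)).1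

lemma le_crit {t u : ℝ≥0} (ht : t ∈ insert 0 T) (htu : t ≤ u) : t ≤ crit T u :=
  Finset.le_max' _ t (Finset.mem_filter.2 ⟨ht, htu⟩)

lemma crit_mono (T : Finset ℝ≥0) : Monotone (crit T) := fun _ _ h =>
  le_crit (crit_mem T _) ((crit_le T _).trans h)

lemma crit_mono_left {T' : Finset ℝ≥0} (h : T ⊆ T') (u : ℝ≥0) : crit T u ≤ crit T' u :=
  le_crit (Finset.insert_subset_insert _ h (crit_mem T u)) (crit_le T u)

lemma crit_le_of_forall_not_mem_Ioc {s u : ℝ≥0} (hT : ∀ r ∈ T, ¬(s < r ∧ r ≤ u)) :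
    crit T u ≤ s := by
  rcases Finset.mem_insert.1 (crit_mem T u) with h | h
  · exact h ▸ zero_le
  · exact not_lt.1 fun hs => hT _ h ⟨hs, crit_le T u⟩

end Crit

section Tame

variable {C : Type u} [Category.{v} C]

lemma TameFunctor.of_retract {V A : ℝ≥0 ⥤ C} (h : Retract V A) (hA : TameFunctor A) :
    TameFunctor V := by
  obtain ⟨T, hT⟩ := hA
  exact ⟨T, fun s u hsu hs => MorphismProperty.of_retract (P := .isomorphisms C)
    (((evaluation ℝ≥0 C).map (homOfLE hsu)).retractArrowApp h) (hT s u hsu hs)⟩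

lemma TameFunctor.isIso_map_crit_le {V : ℝ≥0 ⥤ C} {T : Finset ℝ≥0}
    (hT : ∀ (s u : ℝ≥0) (h : s ≤ u), (∀ r ∈ T, ¬(s < r ∧ r ≤ u)) → IsIso (V.map (homOfLE h)))
    (u : ℝ≥0) : IsIso (V.map (homOfLE (crit_le T u))) :=
  hT _ _ _ fun _ hr h => (le_crit (Finset.mem_insert_of_mem hr) h.2).not_gt h.1

def tameApprox (V : ℝ≥0 ⥤ C) (T : Finset ℝ≥0) : ℝ≥0 ⥤ C := (crit_mono T).functor ⋙ V

lemma tameFunctor_tameApprox (V : ℝ≥0 ⥤ C) (T : Finset ℝ≥0) : TameFunctor (tameApprox V T) := by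
  refine ⟨T, fun s u hsu hs => ?_⟩
  have : IsIso (homOfLE (crit_mono T hsu)) :=
    ⟨homOfLE (le_crit (crit_mem T u) (crit_le_of_forall_not_mem_Ioc hs)), rfl, rfl⟩
  exact Functor.map_isIso V (homOfLE (crit_mono T hsu))

def tameDiagram (V : ℝ≥0 ⥤ C) : Finset ℝ≥0 ⥤ ℝ≥0 ⥤ C where
  obj := tameApprox V
  map h :=
    { app u := V.map (homOfLE (crit_mono_left h.le u))
      naturality _ _ _ := map_comp_map_eq V _ _ _ _ }
  map_id _ := by ext; exact V.map_id _
  map_comp _ _ := by ext; exact V.map_comp _ _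

def tameCocone (V : ℝ≥0 ⥤ C) : Cocone (tameDiagram V) where
  pt := V
  ι.app T :=
    { app u := V.map (homOfLE (crit_le T u))
      naturality _ _ _ := map_comp_map_eq V _ _ _ _ }
  ι.naturality _ _ _ := by ext; exact (V.map_comp _ _).symm.trans (Category.comp_id _).symm

lemma map_crit_le_comp_map_le_crit_comp {V : ℝ≥0 ⥤ C} {u : ℝ≥0} (hu : u ≤ crit {u} u) {X : C}
    (ι : ∀ T, V.obj (crit T u) ⟶ X)
    (hι : ∀ T T' (h : T ⊆ T'), V.map (homOfLE (crit_mono_left h u)) ≫ ι T' = ι T)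
    (T : Finset ℝ≥0) : V.map (homOfLE (crit_le T u)) ≫ V.map (homOfLE hu) ≫ ι {u} = ι T := by
  rw [← hι T (insert u T) (Finset.subset_insert u T),
    ← hι {u} (insert u T) (Finset.singleton_subset_iff.2 (Finset.mem_insert_self u T)),
    ← Category.assoc, ← Category.assoc, ← V.map_comp, ← V.map_comp]
  rfl

/-- At each `u`, the diagram `T ↦ V (crit T u)` is constantly `V u` on the cofinal sets `T ∋ u`. -/
def tameCoconeIsColimit (V : ℝ≥0 ⥤ C) : IsColimit (tameCocone V) :=
  evaluationJointlyReflectsColimits _ fun u =>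
    have hu : u ≤ crit {u} u := le_crit (by simp) le_rfl
    { desc s := V.map (homOfLE hu) ≫ s.ι.app {u}
      fac s := map_crit_le_comp_map_le_crit_comp hu s.ι.app fun _ _ h => s.w (homOfLE h)
      uniq s m hm := by
        have key : ∀ {X} (m' : V.obj u ⟶ X),
            m' = V.map (homOfLE hu) ≫ V.map (homOfLE (crit_le {u} u)) ≫ m' := fun m' => by
          rw [← Category.assoc, map_comp_map_eq_id, Category.id_comp]
        exact (key m).trans (congrArg _ (hm {u})) }

lemma TameFunctor.of_isFinitelyPresentable (V : ℝ≥0 ⥤ C) [IsFinitelyPresentable.{0} V] :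
    TameFunctor V := by
  obtain ⟨T, g, hg⟩ := IsFinitelyPresentable.exists_hom_of_isColimit (tameCoconeIsColimit V) (𝟙 V)
  exact (tameFunctor_tameApprox V T).of_retract ⟨g, (tameCocone V).ι.app T, hg⟩

end Tame

section FinitelyGenerated

variable {R : Type u} [Ring R] (V : ℝ≥0 ⥤ ModuleCat.{u} R)

/-- The values at time `u` of the subfunctor of `V` generated by finitely many `x ∈ V r`. -/
def genSub (S : Finset (Σ r, V.obj r)) (u : ℝ≥0) : Submodule R (V.obj u) :=
  Submodule.span R (Set.range fun p : {p : S // p.1.1 ≤ u} => V.map (homOfLE p.2) p.1.1.2)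

lemma genSub_fg (S : Finset (Σ r, V.obj r)) (u : ℝ≥0) : (genSub V S u).FG :=
  Submodule.fg_span (Set.finite_range _)

lemma genSub_mono {S S' : Finset (Σ r, V.obj r)} (h : S ⊆ S') (u : ℝ≥0) :
    genSub V S u ≤ genSub V S' u :=
  Submodule.span_mono <| Set.range_subset_iff.2 fun p => ⟨⟨⟨p.1.1, h p.1.2⟩, p.2⟩, rfl⟩

lemma map_mem_genSub (S : Finset (Σ r, V.obj r)) {u v : ℝ≥0} (h : u ≤ v) {x : V.obj u}
    (hx : x ∈ genSub V S u) : V.map (homOfLE h) x ∈ genSub V S v := by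
  refine (Submodule.map_span_le _ _ _).2 ?_ ⟨x, hx, rfl⟩
  rintro _ ⟨p, rfl⟩
  refine Submodule.subset_span ⟨⟨p.1, p.2.trans h⟩, ?_⟩
  rw [← ConcreteCategory.comp_apply, ← V.map_comp]
  rfl

lemma mem_genSub_singleton (u : ℝ≥0) (x : V.obj u) : x ∈ genSub V {⟨u, x⟩} u :=
  Submodule.subset_span ⟨⟨⟨_, Finset.mem_singleton_self _⟩, le_rfl⟩, by simp⟩

def genMod (S : Finset (Σ r, V.obj r)) : ℝ≥0 ⥤ ModuleCat.{u} R where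
  obj u := ModuleCat.of R (genSub V S u)
  map {u v} h := ModuleCat.ofHom <| (V.map h).hom.restrict fun _ => map_mem_genSub V S h.le
  map_id u := by ext ⟨x, _⟩; exact ConcreteCategory.congr_hom (V.map_id u) x
  map_comp f g := by ext ⟨x, _⟩; exact ConcreteCategory.congr_hom (V.map_comp f g) x

def genDiagram : Finset (Σ r, V.obj r) ⥤ ℝ≥0 ⥤ ModuleCat.{u} R where
  obj := genMod V
  map h :=
    { app u := ModuleCat.ofHom (Submodule.inclusion (genSub_mono V h.le u))
      naturality _ _ _ := by ext ⟨_, _⟩; rfl }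
  map_id _ := by ext ⟨_, _⟩; rfl
  map_comp _ _ := by ext ⟨_, _⟩; rfl

def genCocone : Cocone (genDiagram V) where
  pt := V
  ι.app S := { app u := ModuleCat.ofHom (genSub V S u).subtype }
  ι.naturality _ _ _ := by ext ⟨_, _⟩; rfl

def genCoconeIsColimit : IsColimit (genCocone V) := by
  classical
  refine evaluationJointlyReflectsColimits _ fun u => ?_
  have : ReflectsColimitsOfShape (Finset (Σ r, V.obj r)) (forget (ModuleCat R)) :=
    reflectsColimitsOfShape_of_reflectsIsomorphisms
  refine isColimitOfReflects (forget (ModuleCat R)) ?_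
  refine Types.FilteredColimit.isColimitOf _ _ ?_ ?_
  · intro x
    refine ⟨({⟨u, x⟩} : Finset (Σ r, V.obj r)), ?_, ?_⟩
    · exact (⟨x, mem_genSub_singleton V u x⟩ : genSub V {⟨u, x⟩} u)
    · rfl
  · intro S S' x x' hx
    exact ⟨S ∪ S', homOfLE Finset.subset_union_left, homOfLE Finset.subset_union_right,
      Subtype.ext hx⟩

lemma finite_obj_of_isFinitelyPresentable [IsFinitelyPresentable.{u} V] (u : ℝ≥0) :
    Module.Finite R (V.obj u) := by
  classical
  obtain ⟨S, g, hg⟩ := IsFinitelyPresentable.exists_hom_of_isColimit (genCoconeIsColimit V) (𝟙 V)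
  have hS : genSub V S u = ⊤ := by
    refine eq_top_iff.2 fun x _ => ?_
    have hx : (genSub V S u).subtype ((g.app u) x) = x :=
      ConcreteCategory.congr_hom (NatTrans.congr_app hg u) x
    exact hx ▸ ((g.app u) x).2
  exact ⟨hS ▸ genSub_fg V S u⟩

end FinitelyGenerated

section Restriction

variable {C : Type u} [Category.{v} C]

abbrev restrictionShape (S : Finset ℝ≥0) : MulticospanShape where
  L := S
  R := {p : S × S // p.1 ≤ p.2}
  fst p := p.1.1
  snd p := p.1.2

/-- The functors `W ↦ (V t ⟶ W t)` for `t ∈ S`, compared in `V t ⟶ W t'` for `t ≤ t'`. -/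
def restrictionIndex (V : ℝ≥0 ⥤ C) (S : Finset ℝ≥0) :
    MulticospanIndex (restrictionShape S) ((ℝ≥0 ⥤ C) ⥤ Type v) where
  left t := (evaluation ℝ≥0 C).obj t.1 ⋙ coyoneda.obj (op (V.obj t.1))
  right p := (evaluation ℝ≥0 C).obj p.1.2.1 ⋙ coyoneda.obj (op (V.obj p.1.1.1))
  fst p := Functor.whiskerRight ((evaluation ℝ≥0 C).map (homOfLE p.2)) _
  snd p := Functor.whiskerLeft _ (coyoneda.map (V.map (homOfLE p.2)).op)

def restrictionMultifork (V : ℝ≥0 ⥤ C) (S : Finset ℝ≥0) : Multifork (restrictionIndex V S) :=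
  Multifork.ofι _ (coyoneda.obj (op V)) (fun t => { app W := TypeCat.ofHom fun f => f.app t.1 })
    fun p => by ext W f; exact (f.naturality (homOfLE p.2)).symm

lemma multifork_restrictionIndex_condition {V : ℝ≥0 ⥤ C} {S : Finset ℝ≥0}
    (E : Multifork (restrictionIndex V S)) (X : ℝ≥0 ⥤ C) (x : E.pt.obj X) (t t' : S)
    (h : t ≤ t') : V.map (homOfLE h) ≫ (E.ι t').app X x = (E.ι t).app X x ≫ X.map (homOfLE h) :=
  (ConcreteCategory.congr_hom (NatTrans.congr_app (E.condition ⟨(t, t'), h⟩) X) x).symm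

variable {V W : ℝ≥0 ⥤ C} {T : Finset ℝ≥0} [∀ u, IsIso (V.map (homOfLE (crit_le T u)))]

lemma natTrans_ext_of_crit {f g : V ⟶ W}
    (h : ∀ t : (insert 0 T : Finset ℝ≥0), f.app t = g.app t) : f = g := by
  ext u
  rw [← cancel_epi (V.map (homOfLE (crit_le T u))), f.naturality, g.naturality,
    h ⟨_, crit_mem T u⟩]

variable (T) in
def extendFromCrit (φ : ∀ t : (insert 0 T : Finset ℝ≥0), V.obj t ⟶ W.obj t)
    (hφ : ∀ (t t' : (insert 0 T : Finset ℝ≥0)) (h : t ≤ t'),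
      V.map (homOfLE h) ≫ φ t' = φ t ≫ W.map (homOfLE h)) :
    V ⟶ W where
  app u := inv (V.map (homOfLE (crit_le T u))) ≫ φ ⟨crit T u, crit_mem T u⟩ ≫
    W.map (homOfLE (crit_le T u))
  naturality u v f := by
    have h := hφ ⟨crit T u, crit_mem T u⟩ ⟨crit T v, crit_mem T v⟩ (crit_mono T f.le)
    have hV : V.map (homOfLE (crit_le T u)) ≫ V.map f =
        V.map (homOfLE (crit_mono T f.le)) ≫ V.map (homOfLE (crit_le T v)) :=
      map_comp_map_eq V _ _ _ _
    rw [← cancel_epi (V.map (homOfLE (crit_le T u)))]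
    simp only [Category.assoc, IsIso.hom_inv_id_assoc, reassoc_of% hV, reassoc_of% h,
      ← Functor.map_comp]
    rfl

lemma extendFromCrit_app (φ : ∀ t : (insert 0 T : Finset ℝ≥0), V.obj t ⟶ W.obj t) (hφ)
    (t : (insert 0 T : Finset ℝ≥0)) : (extendFromCrit T φ hφ).app t = φ t := by
  simp only [extendFromCrit, IsIso.inv_comp_eq]
  exact (hφ ⟨crit T t, crit_mem T t⟩ t (crit_le T t)).symm

def restrictionLift (E : Multifork (restrictionIndex V (insert 0 T))) (X : ℝ≥0 ⥤ C)
    (x : E.pt.obj X) : V ⟶ X :=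
  extendFromCrit T (fun t => (E.ι t).app X x) (multifork_restrictionIndex_condition E X x)

lemma restrictionLift_app (E : Multifork (restrictionIndex V (insert 0 T))) (X : ℝ≥0 ⥤ C)
    (x : E.pt.obj X) (t : (insert 0 T : Finset ℝ≥0)) :
    (restrictionLift E X x).app t = (E.ι t).app X x :=
  extendFromCrit_app _ _ t

variable (V T) in
def restrictionMultiforkIsLimit : IsLimit (restrictionMultifork V (insert 0 T)) :=
  Multifork.IsLimit.mk _
    (fun E =>
      { app X := TypeCat.ofHom (restrictionLift E X)
        naturality X Y g := by
          ext x
          refine natTrans_ext_of_crit (V := V) (T := T) fun t => ?_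
          change (restrictionLift E Y (E.pt.map g x)).app t = (restrictionLift E X x ≫ g).app t
          rw [restrictionLift_app, NatTrans.comp_app, restrictionLift_app]
          exact ConcreteCategory.congr_hom ((E.ι t).naturality g) x })
    (fun E t => by
      ext X x
      exact restrictionLift_app E X x t)
    (fun E m hm => by
      ext X x
      refine natTrans_ext_of_crit (V := V) (T := T) fun t => ?_
      change (m.app X x).app t = (restrictionLift E X x).app t
      rw [restrictionLift_app]
      exact ConcreteCategory.congr_hom (NatTrans.congr_app (hm t) X) x)

lemma isFinitelyPresentable_of_isIso_map_crit_le [HasColimitsOfSize.{v, v} C] (V : ℝ≥0 ⥤ C)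
    (T : Finset ℝ≥0) [∀ u, IsIso (V.map (homOfLE (crit_le T u)))]
    [∀ t, IsFinitelyPresentable.{v} (V.obj t)] : IsFinitelyPresentable.{v} V := by
  have : ∀ k, ((restrictionIndex V (insert 0 T)).multicospan.obj k).IsCardinalAccessible
      Cardinal.aleph0.{v} := by
    rintro (t | p) <;> dsimp [restrictionIndex] <;> infer_instance
  exact Functor.isCardinalAccessible_of_isLimit _ (restrictionMultiforkIsLimit V T) _
    ((hasCardinalLT_aleph0_iff _).2 inferInstance)

end Restriction

/-- A persistence module `V` is a compact object of `pVec` iff `V` is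
tame and of finite type, i.e. `V(u)` is a finite-dimensional `ℚ`-vector space for
every `u ≥ 0`. -/
theorem isCompact_persMod_iff (V : PersMod) :
    IsCompactObject V ↔
      TameFunctor V ∧ ∀ u : ℝ≥0, FiniteDimensional ℚ (V.obj u) := by
  rw [isCompactObject_iff_isFinitelyPresentable]
  constructor
  · intro _
    exact ⟨.of_isFinitelyPresentable V, finite_obj_of_isFinitelyPresentable V⟩
  · rintro ⟨⟨T, hT⟩, _⟩
    have := TameFunctor.isIso_map_crit_le hT
    have (t : ℝ≥0) : IsFinitelyPresentable.{0} (V.obj t) :=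
      ModuleCat.isFinitelyPresentable_of_free_of_finite _
    exact isFinitelyPresentable_of_isIso_map_crit_le V T

end Pers
end
end
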